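/- arXiv:math/0404551 — 6 statements merged into one kernel-verified Lean document; each statement's English description precedes it below -/
import Mathlib

section
/- Let u : 𝔻 → [0,∞) be continuous and integrable, and let R ∈ (0,1). Then ∫_𝔻 u(z)·ln(1/|z|) dA(z) ≤ (2π/e)·R·sup_{|z| ≤ R} u(z) + ln(1/R)·∫_𝔻 u dA. (This is the key splitting inequality in the proof of the paper's Proposition on τ, using max_{r ∈ [0,1]} r·ln(1/r) = 1/e.) -/
/-!
Split the disc at `‖z‖ = R`. Since `r ↦ r log (1/r)` is at most `1/e` on `[0, 1]`, on the inner disc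
`u z log (1/‖z‖) ≤ (sup u) / (e ‖z‖)`, and `∫_{‖z‖<R} dA / ‖z‖ = 2πR` in polar coordinates. On the
outer annulus `log (1/‖z‖) ≤ log (1/R)`.
-/

open MeasureTheory Set Metric Real

theorem Real.log_one_div_nonneg {x : ℝ} (h0 : 0 ≤ x) (h1 : x ≤ 1) : 0 ≤ log (1 / x) := by
  rw [one_div, log_inv]
  exact neg_nonneg.2 (log_nonpos h0 h1)

theorem Real.log_one_div_le_inv_exp_mul {x : ℝ} (hx : 0 ≤ x) : log (1 / x) ≤ (exp 1 * x)⁻¹ := by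
  rcases hx.eq_or_lt with rfl | hx
  · simp -- `log 0 = 0` and `0⁻¹ = 0`
  have := log_le_sub_one_of_pos (inv_pos.2 (mul_pos (exp_pos 1) hx))
  rw [log_inv, log_mul (exp_pos 1).ne' hx.ne', log_exp] at this
  rw [one_div, log_inv]
  linarith

theorem Real.mul_log_one_div_le_indicator_inv_add {a M r R : ℝ} (ha : 0 ≤ a) (hr : 0 ≤ r)
    (hR : 0 < R) (hR1 : R ≤ 1) (haM : r < R → a ≤ M) :
    a * log (1 / r) ≤ M / exp 1 * (Iio R).indicator (·⁻¹) r + log (1 / R) * a := by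
  have hlogR_mul : 0 ≤ log (1 / R) * a := mul_nonneg (log_one_div_nonneg hR.le hR1) ha
  by_cases hrR : r < R
  · rw [indicator_of_mem (mem_Iio.2 hrR)]
    calc a * log (1 / r) ≤ M * (exp 1 * r)⁻¹ :=
          mul_le_mul (haM hrR) (log_one_div_le_inv_exp_mul hr)
            (log_one_div_nonneg hr (hrR.le.trans hR1)) (ha.trans (haM hrR))
      _ = M / exp 1 * r⁻¹ := by rw [mul_inv, div_eq_mul_inv, mul_assoc]
      _ ≤ _ := le_add_of_nonneg_right hlogR_mul
  · rw [indicator_of_notMem (fun h ↦ hrR (mem_Iio.1 h)), mul_zero, zero_add, mul_comm]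
    have hRr : R ≤ r := not_lt.1 hrR
    gcongr
    exact one_div_pos.2 (hR.trans_le hRr)

theorem Complex.pow_smul_indicator_Iio_inv {r y : ℝ} (hy : 0 < y) :
    y ^ (Module.finrank ℝ ℂ - 1) • (Iio r).indicator (·⁻¹) y = (Iio r).indicator 1 y := by
  by_cases h : y < r <;> simp [h, hy.ne']

theorem Complex.integrable_indicator_Iio_inv_norm (r : ℝ) :
    Integrable (fun z : ℂ ↦ (Iio r).indicator (·⁻¹) ‖z‖) := by
  rw [integrable_fun_norm_addHaar volume]
  refine IntegrableOn.congr_fun ?_ (fun y hy ↦ (pow_smul_indicator_Iio_inv hy).symm)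
    measurableSet_Ioi
  rw [IntegrableOn, integrable_indicator_iff measurableSet_Iio, IntegrableOn,
    Measure.restrict_restrict measurableSet_Iio, Iio_inter_Ioi]
  exact integrableOn_const measure_Ioo_lt_top.ne

theorem Complex.integral_indicator_Iio_inv_norm {r : ℝ} (hr : 0 ≤ r) :
    ∫ z : ℂ, (Iio r).indicator (·⁻¹) ‖z‖ = 2 * π * r := by
  rw [integral_fun_norm_addHaar volume, setIntegral_congr_fun measurableSet_Ioi
    (fun y hy ↦ pow_smul_indicator_Iio_inv hy), integral_indicator_one measurableSet_Iio,
    measureReal_restrict_apply measurableSet_Iio, Iio_inter_Ioi, Real.volume_real_Ioo_of_le hr,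
    measureReal_def, Complex.volume_ball]
  simp [mul_assoc]

/-- For `u : 𝔻 → [0,∞)` continuous and integrable and `R ∈ (0,1)`,
`∫_𝔻 u(z)·ln(1/|z|) dA(z) ≤ (2π/e)·R·sup_{|z| ≤ R} u(z) + ln(1/R)·∫_𝔻 u dA`. -/
theorem tau_le_sup_add_log_mul_area
    (u : ℂ → ℝ) (hc : ContinuousOn u (Metric.ball (0 : ℂ) 1))
    (hpos : ∀ z ∈ Metric.ball (0 : ℂ) 1, 0 ≤ u z)
    (hint : IntegrableOn u (Metric.ball (0 : ℂ) 1))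
    (R : ℝ) (hR : R ∈ Set.Ioo (0 : ℝ) 1) :
    ∫ z in Metric.ball (0 : ℂ) 1, u z * Real.log (1 / ‖z‖)
      ≤ (2 * Real.pi / Real.exp 1) * R * (⨆ z : Metric.closedBall (0 : ℂ) R, u (z : ℂ))
        + Real.log (1 / R) * ∫ z in Metric.ball (0 : ℂ) 1, u z := by
  obtain ⟨hR0, hR1⟩ := hR
  set M := ⨆ z : closedBall (0 : ℂ) R, u z
  have hM : ∀ z ∈ closedBall (0 : ℂ) R, u z ≤ M := by
    have hbdd := (isCompact_closedBall (0 : ℂ) R).bddAbove_image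
      (hc.mono (closedBall_subset_ball hR1))
    rw [image_eq_range] at hbdd
    exact fun z hz ↦ le_ciSup hbdd ⟨z, hz⟩
  set φ : ℂ → ℝ := fun z ↦ (Iio R).indicator (·⁻¹) ‖z‖
  have hφ : ∫ z in ball 0 1, φ z = 2 * π * R := by
    rw [setIntegral_eq_integral_of_forall_compl_eq_zero fun z hz ↦ ?_]
    · exact Complex.integral_indicator_Iio_inv_norm hR0.le
    · exact indicator_of_notMem (s := Iio R)
        (fun h ↦ hz (mem_ball_zero_iff.2 (lt_trans h hR1))) _
  have hφint : Integrable φ := Complex.integrable_indicator_Iio_inv_norm R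
  calc ∫ z in ball 0 1, u z * log (1 / ‖z‖)
      ≤ ∫ z in ball 0 1, (M / exp 1 * φ z + log (1 / R) * u z) := by
        refine integral_mono_of_nonneg ?_
          ((hφint.const_mul _).integrableOn.add (hint.const_mul _)) ?_
        · refine ae_restrict_of_forall_mem measurableSet_ball fun z hz ↦ ?_
          exact mul_nonneg (hpos z hz)
            (log_one_div_nonneg (norm_nonneg z) (mem_ball_zero_iff.1 hz).le)
        · refine ae_restrict_of_forall_mem measurableSet_ball fun z hz ↦ ?_
          exact mul_log_one_div_le_indicator_inv_add (hpos z hz) (norm_nonneg z) hR0 hR1.le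
            fun h ↦ hM z (mem_closedBall_zero_iff.2 h.le)
    _ = M / exp 1 * (∫ z in ball 0 1, φ z) + log (1 / R) * ∫ z in ball 0 1, u z := by
        rw [integral_add (hφint.const_mul _).integrableOn (hint.const_mul _), integral_const_mul,
          integral_const_mul]
    _ = _ := by rw [hφ]; ring
end

section
/- Let (u_n) be a sequence of continuous integrable functions u_n : 𝔻 → [0,∞). Set τ_n = ∫_𝔻 u_n(z)·ln(1/|z|) dA(z) and a_n = ∫_𝔻 u_n dA. If τ_n → ∞ and there is a constant B > 0 with a_n ≤ B·τ_n for all n, then sup_{z ∈ 𝔻} (1−|z|²)²·u_n(z) → ∞ as n → ∞. (This is the paper's Proposition 'area(f_n) = O(τ(f_n)) implies the hyperbolic derivatives blow up', stated for the functions u_n = |f_n'|².) -/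
/- If `(1 - |z|²)² u` were bounded by `M`, then on a disc `|z| < r` the function `u` is bounded by
`M / (1 - r²)²`, while outside it `ln (1/|z|) ≤ ln (1/r)`. Hence
`τ ≤ M / (1 - r²)² · ∫_𝔻 ln (1/|z|) dA + ln (1/r) · a ≤ C_M + ln (1/r) · B · τ`, and choosing
`ln (1/r) = 1/(2B)` gives `τ ≤ 2 C_M`, which fails once `τ_n` is large. -/

open MeasureTheory Filter Metric

theorem setIntegral_mul_le_of_forall_le_or_le {α : Type*} [MeasurableSpace α] {μ : Measure α}
    {s : Set α} {f w : α → ℝ} {c δ : ℝ} (hs : MeasurableSet s) (hc : 0 ≤ c) (hδ : 0 ≤ δ)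
    (hf : IntegrableOn f s μ) (hw : IntegrableOn w s μ)
    (hf0 : ∀ x ∈ s, 0 ≤ f x) (hw0 : ∀ x ∈ s, 0 ≤ w x)
    (hsplit : ∀ x ∈ s, f x ≤ c ∨ w x ≤ δ) :
    ∫ x in s, f x * w x ∂μ ≤ c * ∫ x in s, w x ∂μ + δ * ∫ x in s, f x ∂μ := by
  have hpointwise : ∀ x ∈ s, f x * w x ≤ c * w x + δ * f x := by
    intro x hx
    have := hf0 x hx
    have := hw0 x hx
    rcases hsplit x hx with h | h <;> nlinarith
  calc ∫ x in s, f x * w x ∂μ ≤ ∫ x in s, c * w x + δ * f x ∂μ := by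
        refine integral_mono_of_nonneg ?_ ((hw.const_mul c).add (hf.const_mul δ)) ?_
        · filter_upwards [ae_restrict_mem hs] with x hx
          exact mul_nonneg (hf0 x hx) (hw0 x hx)
        · filter_upwards [ae_restrict_mem hs] with x hx
          exact hpointwise x hx
    _ = c * ∫ x in s, w x ∂μ + δ * ∫ x in s, f x ∂μ := by
        rw [integral_add (hw.const_mul c) (hf.const_mul δ), integral_const_mul, integral_const_mul]

theorem log_inv_nonneg_of_mem_ball {E : Type*} [SeminormedAddCommGroup E] {z : E}
    (hz : z ∈ ball (0 : E) 1) : 0 ≤ Real.log (1 / ‖z‖) := by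
  rw [one_div, Real.log_inv, neg_nonneg]
  exact Real.log_nonpos (norm_nonneg z) (mem_ball_zero_iff.mp hz).le

theorem integrableOn_log_inv_norm_ball {E : Type*} [NormedAddCommGroup E] [NormedSpace ℝ E]
    [FiniteDimensional ℝ E] [MeasurableSpace E] [BorelSpace E] {μ : Measure E}
    [μ.IsAddHaarMeasure] (hE : 1 < Module.finrank ℝ E) :
    IntegrableOn (fun z : E => Real.log (1 / ‖z‖)) (ball 0 1) μ := by
  refine integrableOn_ball_of_norm_le_rpow (C := 1) (α := 1) hE.le (by exact_mod_cast hE) ?_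
    (Real.measurable_log.comp (by fun_prop)).aestronglyMeasurable
  filter_upwards [ae_restrict_mem measurableSet_ball] with z hz
  rcases eq_or_ne z 0 with rfl | hz0
  · simp
  have hnorm : 0 < ‖z‖ := norm_pos_iff.mpr hz0
  have := Real.abs_log_mul_self_lt ‖z‖ hnorm (mem_ball_zero_iff.mp hz).le
  rw [abs_mul, abs_of_pos hnorm] at this
  rw [Real.rpow_neg_one, one_mul, Real.norm_eq_abs, one_div, Real.log_inv, abs_neg, ← one_div,
    le_div_iff₀ hnorm]
  exact this.le

theorem le_div_or_log_inv_le {t r v M : ℝ} (ht : 0 ≤ t) (hr0 : 0 < r) (hr1 : r < 1)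
    (hv : 0 ≤ v) (h : (1 - t ^ 2) ^ 2 * v ≤ M) :
    v ≤ M / (1 - r ^ 2) ^ 2 ∨ Real.log (1 / t) ≤ Real.log (1 / r) := by
  rcases lt_or_ge t r with htr | hrt
  · left
    have hr2 : 0 < 1 - r ^ 2 := by nlinarith
    have hweight : (1 - r ^ 2) ^ 2 ≤ (1 - t ^ 2) ^ 2 := by gcongr
    rw [le_div_iff₀ (by positivity)]
    nlinarith
  · exact Or.inr (Real.log_le_log (one_div_pos.mpr (hr0.trans_le hrt))
      (one_div_le_one_div_of_le hr0 hrt))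

theorem setIntegral_mul_log_inv_norm_le_of_forall_le {E : Type*} [NormedAddCommGroup E]
    [NormedSpace ℝ E] [FiniteDimensional ℝ E] [MeasurableSpace E] [BorelSpace E]
    {μ : Measure E} [μ.IsAddHaarMeasure] (hE : 1 < Module.finrank ℝ E) {u : E → ℝ} {M r : ℝ}
    (hpos : ∀ z ∈ ball (0 : E) 1, 0 ≤ u z) (hint : IntegrableOn u (ball 0 1) μ)
    (hr0 : 0 < r) (hr1 : r < 1) (hM : ∀ z ∈ ball (0 : E) 1, (1 - ‖z‖ ^ 2) ^ 2 * u z ≤ M) :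
    ∫ z in ball (0 : E) 1, u z * Real.log (1 / ‖z‖) ∂μ ≤
      M / (1 - r ^ 2) ^ 2 * ∫ z in ball (0 : E) 1, Real.log (1 / ‖z‖) ∂μ +
        Real.log (1 / r) * ∫ z in ball (0 : E) 1, u z ∂μ := by
  have hM0 : 0 ≤ M := by
    have h0 := hM 0 (mem_ball_self one_pos)
    rw [norm_zero] at h0
    linarith [hpos 0 (mem_ball_self one_pos)]
  exact setIntegral_mul_le_of_forall_le_or_le measurableSet_ball (by positivity)
    (Real.log_nonneg (one_le_one_div hr0 hr1.le)) hint (integrableOn_log_inv_norm_ball hE) hpos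
    (fun z hz => log_inv_nonneg_of_mem_ball hz)
    (fun z hz => le_div_or_log_inv_le (norm_nonneg z) hr0 hr1 (hpos z hz) (hM z hz))

theorem hyperbolic_sup_tendsto_atTop_of_area_bigO_tau_general
    (u : ℕ → ℂ → ℝ)
    (hpos : ∀ n, ∀ z ∈ Metric.ball (0 : ℂ) 1, 0 ≤ u n z)
    (hint : ∀ n, IntegrableOn (u n) (Metric.ball (0 : ℂ) 1))
    (htau : Tendsto
      (fun n => ∫ z in Metric.ball (0 : ℂ) 1, u n z * Real.log (1 / ‖z‖))
      atTop atTop)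
    (B : ℝ) (hB : 0 < B)
    (hbound : ∀ n, (∫ z in Metric.ball (0 : ℂ) 1, u n z)
      ≤ B * ∫ z in Metric.ball (0 : ℂ) 1, u n z * Real.log (1 / ‖z‖)) :
    ∀ M : ℝ, ∃ N : ℕ, ∀ n ≥ N, ∃ z ∈ Metric.ball (0 : ℂ) 1,
      M < (1 - ‖z‖ ^ 2) ^ 2 * u n z := by
  intro M
  set r := Real.exp (-(2 * B)⁻¹)
  have hr1 : r < 1 := Real.exp_lt_one_iff.mpr (by simp [hB])
  have hlog : Real.log (1 / r) = (2 * B)⁻¹ := by simp [r]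
  set C := M / (1 - r ^ 2) ^ 2 * ∫ z in ball (0 : ℂ) 1, Real.log (1 / ‖z‖)
  obtain ⟨N, hN⟩ := (htau.eventually_gt_atTop (2 * C)).exists_forall_of_atTop
  refine ⟨N, fun n hn => ?_⟩
  by_contra! hsup
  have hτ := setIntegral_mul_log_inv_norm_le_of_forall_le (by simp) (hpos n) (hint n)
    (Real.exp_pos _) hr1 hsup
  have harea : (2 * B)⁻¹ * ∫ z in ball (0 : ℂ) 1, u n z ≤
      (∫ z in ball (0 : ℂ) 1, u n z * Real.log (1 / ‖z‖)) / 2 := by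
    calc _ ≤ (2 * B)⁻¹ * (B * ∫ z in ball (0 : ℂ) 1, u n z * Real.log (1 / ‖z‖)) := by
          gcongr
          exact hbound n
      _ = _ := by field_simp
  rw [hlog] at hτ
  linarith [hN n hn]

/-- If `u_n : 𝔻 → [0,∞)` are continuous and integrable,
`τ_n = ∫_𝔻 u_n(z)·ln(1/|z|) dA → ∞` and `a_n = ∫_𝔻 u_n dA ≤ B·τ_n`, then
`sup_{z ∈ 𝔻} (1−|z|²)²·u_n(z) → ∞`, i.e. for every `M` there is `N` such that the
supremum exceeds `M` for all `n ≥ N`. -/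
theorem hyperbolic_sup_tendsto_atTop_of_area_bigO_tau
    (u : ℕ → ℂ → ℝ)
    (hc : ∀ n, ContinuousOn (u n) (Metric.ball (0 : ℂ) 1))
    (hpos : ∀ n, ∀ z ∈ Metric.ball (0 : ℂ) 1, 0 ≤ u n z)
    (hint : ∀ n, IntegrableOn (u n) (Metric.ball (0 : ℂ) 1))
    (htau : Tendsto
      (fun n => ∫ z in Metric.ball (0 : ℂ) 1, u n z * Real.log (1 / ‖z‖))
      atTop atTop)
    (B : ℝ) (hB : 0 < B)
    (hbound : ∀ n, (∫ z in Metric.ball (0 : ℂ) 1, u n z)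
      ≤ B * ∫ z in Metric.ball (0 : ℂ) 1, u n z * Real.log (1 / ‖z‖)) :
    ∀ M : ℝ, ∃ N : ℕ, ∀ n ≥ N, ∃ z ∈ Metric.ball (0 : ℂ) 1,
      M < (1 - ‖z‖ ^ 2) ^ 2 * u n z :=
  hyperbolic_sup_tendsto_atTop_of_area_bigO_tau_general u hpos hint htau B hB hbound
end

section
/- Let (u_n) be a sequence of continuous integrable functions u_n : 𝔻 → [0,∞). Set τ_n = ∫_𝔻 u_n(z)·ln(1/|z|) dA(z) and a_n = ∫_𝔻 u_n dA. If τ_n → ∞ and a_n = o(τ_n) (i.e. a_n/τ_n → 0), then for every r ∈ (0,1) one has sup_{|z| ≤ r} u_n(z) → ∞ as n → ∞. (This is the first assertion of the paper's Proposition used to deduce non-Kobayashi-hyperbolicity, stated for u_n = |f_n'|².) -/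
/-!
If `u ≤ M` on the closed disc of radius `r < 1`, compare the weight `log (1 / |z|)` with the
level `log (1 / r)`: above it `|z| < r`, so `u ≤ M` there, and below it the weight is at most
`log (1 / r)`. Hence `τ ≤ M ∫_𝔻 log (1 / |z|) dA + log (1 / r) · a`, where the first integral is
finite because the logarithmic singularity is dominated by `2 |z|^(-1/2)`. As `τ_n → ∞` and
`a_n = o(τ_n)`, this bound fails for all large `n`.
-/

open MeasureTheory Filter Metric

theorem setIntegral_mul_le_of_le_on_superlevelSet {α : Type*} [MeasurableSpace α]
    {μ : Measure α} {s : Set α} {f w : α → ℝ} {M L : ℝ} (hs : MeasurableSet s)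
    (hM : 0 ≤ M) (hL : 0 ≤ L) (hf₀ : ∀ x ∈ s, 0 ≤ f x) (hw₀ : ∀ x ∈ s, 0 ≤ w x)
    (hf : IntegrableOn f s μ) (hw : IntegrableOn w s μ) (hfM : ∀ x ∈ s, L < w x → f x ≤ M) :
    ∫ x in s, f x * w x ∂μ ≤ M * ∫ x in s, w x ∂μ + L * ∫ x in s, f x ∂μ := by
  have hpt : ∀ x ∈ s, f x * w x ≤ M * w x + L * f x := by
    intro x hx
    by_cases hLw : L < w x
    · nlinarith [hfM x hx hLw, hw₀ x hx, hf₀ x hx]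
    · nlinarith [hw₀ x hx, hf₀ x hx]
  rw [← integral_const_mul, ← integral_const_mul,
    ← integral_add (hw.const_mul M) (hf.const_mul L)]
  exact integral_mono_of_nonneg
    (ae_restrict_of_forall_mem hs fun x hx => mul_nonneg (hf₀ x hx) (hw₀ x hx))
    ((hw.const_mul M).add (hf.const_mul L)) (ae_restrict_of_forall_mem hs hpt)

theorem log_one_div_norm_nonneg {E : Type*} [SeminormedAddCommGroup E] {x : E}
    (hx : x ∈ ball (0 : E) 1) : 0 ≤ Real.log (1 / ‖x‖) := by
  rw [one_div, Real.log_inv, neg_nonneg]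
  exact Real.log_nonpos (norm_nonneg x) (mem_ball_zero_iff.mp hx).le

section NormedSpace

variable {E : Type*} [NormedAddCommGroup E] [NormedSpace ℝ E] [FiniteDimensional ℝ E]
  [MeasurableSpace E] [BorelSpace E] {μ : Measure E} [μ.IsAddHaarMeasure]

theorem integrableOn_log_one_div_norm_ball [Nontrivial E] :
    IntegrableOn (fun x : E => Real.log (1 / ‖x‖)) (ball 0 1) μ := by
  refine integrableOn_ball_of_norm_le_rpow (C := 2) (α := 1 / 2) Module.finrank_pos ?_ ?_
    (Real.measurable_log.comp (measurable_const.div measurable_norm)).aestronglyMeasurable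
  · exact lt_of_lt_of_le (by norm_num) (Nat.one_le_cast.mpr Module.finrank_pos)
  · refine ae_restrict_of_forall_mem measurableSet_ball fun x hx => ?_
    calc ‖Real.log (1 / ‖x‖)‖ = Real.log (1 / ‖x‖) :=
          Real.norm_of_nonneg (log_one_div_norm_nonneg hx)
      _ ≤ (1 / ‖x‖) ^ (1 / 2 : ℝ) / (1 / 2) := Real.log_le_rpow_div (by positivity) (by norm_num)
      _ = 2 * ‖x‖ ^ (-(1 / 2 : ℝ)) := by
          rw [Real.rpow_neg (norm_nonneg x), one_div ‖x‖, Real.inv_rpow (norm_nonneg x)]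
          ring

theorem setIntegral_ball_mul_log_one_div_norm_le [Nontrivial E] {u : E → ℝ} {r M : ℝ}
    (hr₀ : 0 < r) (hr₁ : r ≤ 1) (hM : 0 ≤ M) (hu₀ : ∀ x ∈ ball (0 : E) 1, 0 ≤ u x)
    (hu : IntegrableOn u (ball 0 1) μ) (huM : ∀ x, ‖x‖ ≤ r → u x ≤ M) :
    ∫ x in ball 0 1, u x * Real.log (1 / ‖x‖) ∂μ ≤
      M * ∫ x in ball (0 : E) 1, Real.log (1 / ‖x‖) ∂μ +
        Real.log (1 / r) * ∫ x in ball 0 1, u x ∂μ := by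
  refine setIntegral_mul_le_of_le_on_superlevelSet measurableSet_ball hM
    (Real.log_nonneg (one_le_one_div hr₀ hr₁)) hu₀ (fun x hx => log_one_div_norm_nonneg hx) hu
    integrableOn_log_one_div_norm_ball fun x _ hlt => huM x ?_
  by_contra! hrx
  exact hlt.not_ge <|
    Real.log_le_log (one_div_pos.mpr (hr₀.trans hrx)) (one_div_le_one_div_of_le hr₀ hrx.le)

end NormedSpace

theorem eventually_add_mul_lt_of_div_tendsto_zero {ι : Type*} {l : Filter ι} {a τ : ι → ℝ}
    (hτ : Tendsto τ l atTop) (ha : Tendsto (fun i => a i / τ i) l (nhds 0)) (C L : ℝ) :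
    ∀ᶠ i in l, C + L * a i < τ i := by
  have hLa : Tendsto (fun i => L * (a i / τ i)) l (nhds 0) := by
    simpa using ha.const_mul L
  filter_upwards [hτ.eventually_gt_atTop (2 * C), hτ.eventually_gt_atTop 0,
    hLa.eventually (gt_mem_nhds (by norm_num : (0 : ℝ) < 1 / 2))] with i hC hτ₀ hsmall
  rw [← mul_div_assoc, div_lt_iff₀ hτ₀] at hsmall
  linarith

theorem sup_on_compact_tendsto_atTop_of_area_littleO_tau_general
    (u : ℕ → ℂ → ℝ)
    (hpos : ∀ n, ∀ z ∈ Metric.ball (0 : ℂ) 1, 0 ≤ u n z)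
    (hint : ∀ n, IntegrableOn (u n) (Metric.ball (0 : ℂ) 1))
    (htau : Tendsto
      (fun n => ∫ z in Metric.ball (0 : ℂ) 1, u n z * Real.log (1 / ‖z‖))
      atTop atTop)
    (hlittle : Tendsto
      (fun n => (∫ z in Metric.ball (0 : ℂ) 1, u n z) /
        ∫ z in Metric.ball (0 : ℂ) 1, u n z * Real.log (1 / ‖z‖))
      atTop (nhds 0)) :
    ∀ r ∈ Set.Ioo (0 : ℝ) 1, ∀ M : ℝ, ∃ N : ℕ, ∀ n ≥ N, ∃ z : ℂ,
      ‖z‖ ≤ r ∧ M < u n z := by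
  intro r ⟨hr₀, hr₁⟩ M
  obtain ⟨N, hN⟩ := eventually_atTop.mp <| eventually_add_mul_lt_of_div_tendsto_zero htau hlittle
    (max M 0 * ∫ z in ball (0 : ℂ) 1, Real.log (1 / ‖z‖)) (Real.log (1 / r))
  refine ⟨N, fun n hn => ?_⟩
  by_contra! hbound
  exact (hN n hn).not_ge <| setIntegral_ball_mul_log_one_div_norm_le hr₀ hr₁.le
    (le_max_right M 0) (hpos n) (hint n) fun z hz => (hbound z hz).trans (le_max_left M 0)

/-- If `u_n : 𝔻 → [0,∞)` are continuous and integrable,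
`τ_n = ∫_𝔻 u_n(z)·ln(1/|z|) dA → ∞` and `a_n = ∫_𝔻 u_n dA = o(τ_n)`, then for every
`r ∈ (0,1)` one has `sup_{|z| ≤ r} u_n(z) → ∞`. -/
theorem sup_on_compact_tendsto_atTop_of_area_littleO_tau
    (u : ℕ → ℂ → ℝ)
    (hc : ∀ n, ContinuousOn (u n) (Metric.ball (0 : ℂ) 1))
    (hpos : ∀ n, ∀ z ∈ Metric.ball (0 : ℂ) 1, 0 ≤ u n z)
    (hint : ∀ n, IntegrableOn (u n) (Metric.ball (0 : ℂ) 1))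
    (htau : Tendsto
      (fun n => ∫ z in Metric.ball (0 : ℂ) 1, u n z * Real.log (1 / ‖z‖))
      atTop atTop)
    (hlittle : Tendsto
      (fun n => (∫ z in Metric.ball (0 : ℂ) 1, u n z) /
        ∫ z in Metric.ball (0 : ℂ) 1, u n z * Real.log (1 / ‖z‖))
      atTop (nhds 0)) :
    ∀ r ∈ Set.Ioo (0 : ℝ) 1, ∀ M : ℝ, ∃ N : ℕ, ∀ n ≥ N, ∃ z : ℂ,
      ‖z‖ ≤ r ∧ M < u n z :=
  sup_on_compact_tendsto_atTop_of_area_littleO_tau_general u hpos hint htau hlittle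
end

section
/- Let f : 𝔻 → ℂⁿ be holomorphic with area(f) finite, and let r ∈ (0,1). Then sup_{|z| ≤ r} ‖f'(z)‖ ≥ (1/r)·L − (√(π(1−r²))/(2π r²))·(area(f))^{1/2}, where L = liminf_{|z| → 1} ‖f(z) − f(0)‖. (This is the paper's Brody-type derivative lower bound for pseudo-holomorphic disks, in the case of the standard Kähler structure on ℂⁿ.) -/
/-!
Let `M` be the supremum of `‖f'‖` on `|z| ≤ r` and `A` the area of `f`. By Cauchy–Schwarz,
`∫_{r ≤ |z| < 1} ‖f'‖ ≤ √(π (1 - r²)) √A`. In polar coordinates the left-hand side is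
`∫_θ ∫_r^1 t ‖f'(t e^{iθ})‖ dt dθ`, so for some direction `e` the radial integral
`∫_r^1 ‖f'(t e)‖ dt` is at most `√(π (1 - r²)) √A / (2π r)`. Along that ray,
`‖f(s e) - f 0‖ ≤ M r + ∫_r^s ‖f'(t e)‖ dt` for every `s ∈ (r, 1)`, and this bounds each
infimum in the definition of `L`.
-/

open MeasureTheory Filter Set Metric
open scoped ENNReal Real Topology

theorem IsCompact.le_ciSup_of_continuousOn {X : Type*} [TopologicalSpace X] {K : Set X}
    (hK : IsCompact K) {g : X → ℝ} (hg : ContinuousOn g K) {x : X} (hx : x ∈ K) :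
    g x ≤ ⨆ y : K, g y :=
  le_ciSup (image_eq_range g K ▸ hK.bddAbove_image hg) ⟨x, hx⟩

theorem lintegral_enorm_le_sqrt_measureReal_mul_sqrt_integral_sq {α E : Type*}
    [MeasurableSpace α] [NormedAddCommGroup E] {μ : Measure α} [IsFiniteMeasure μ] {g : α → E}
    (hg : AEStronglyMeasurable g μ) (hg2 : Integrable (fun x => ‖g x‖ ^ 2) μ) :
    ∫⁻ x, ‖g x‖ₑ ∂μ ≤ ENNReal.ofReal (√(μ.real univ) * √(∫ x, ‖g x‖ ^ 2 ∂μ)) := by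
  have hL2 : MemLp g 2 μ := (memLp_two_iff_integrable_sq_norm hg).2 hg2
  have key := eLpNorm_le_eLpNorm_mul_rpow_measure_univ (p := 1) (q := 2) (by norm_num) hg
  rw [eLpNorm_one_eq_lintegral_enorm, hL2.eLpNorm_eq_integral_rpow_norm two_ne_zero
    ENNReal.ofNat_ne_top, ← ofReal_measureReal, ENNReal.ofReal_rpow_of_nonneg measureReal_nonneg
    (by norm_num), ← ENNReal.ofReal_mul' (by positivity)] at key
  refine key.trans_eq ?_
  norm_num [← Real.sqrt_eq_rpow, mul_comm]

theorem Complex.volume_real_ball (a : ℂ) {r : ℝ} (hr : 0 ≤ r) :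
    volume.real (ball a r) = π * r ^ 2 := by
  simp [measureReal_def, hr, mul_comm]

theorem Complex.exists_norm_eq_one_lintegral_ray_le {g : ℂ → ℝ≥0∞} (hg : Measurable g) :
    ∃ e : ℂ, ‖e‖ = 1 ∧
      ∫⁻ t in Ioi 0, ENNReal.ofReal t * g (t * e) ≤ (∫⁻ z, g z) / ENNReal.ofReal (2 * π) := by
  set F : ℝ × ℝ → ℝ≥0∞ := fun p =>
    ENNReal.ofReal p.1 * g (p.1 * (Real.cos p.2 + Real.sin p.2 * Complex.I))
  have hF : Measurable F := measurable_fst.ennreal_ofReal.mul (hg.comp (by fun_prop))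
  have hvol : volume (Ioo (-π) π) = ENNReal.ofReal (2 * π) := by
    rw [Real.volume_Ioo]
    ring_nf
  have htot : ∫⁻ θ in Ioo (-π) π, ∫⁻ t in Ioi 0, F (t, θ) = ∫⁻ z, g z := by
    rw [← Complex.lintegral_comp_polarCoord_symm,
      show polarCoord.target = Ioi 0 ×ˢ Ioo (-π) π from rfl, Measure.volume_eq_prod,
      ← Measure.prod_restrict]
    simp only [Complex.polarCoord_symm_apply, smul_eq_mul]
    exact (lintegral_prod_symm F hF.aemeasurable).symm
  obtain ⟨θ, -, hθ⟩ := exists_le_setLAverage (μ := volume) (s := Ioo (-π) π)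
    (by simp [hvol, Real.pi_pos]) (hvol ▸ ENNReal.ofReal_ne_top)
    (hF.lintegral_prod_left' (μ := volume.restrict (Ioi 0))).aemeasurable
  refine ⟨Real.cos θ + Real.sin θ * Complex.I, ?_, ?_⟩
  · exact_mod_cast Complex.norm_cos_add_sin_mul_I θ
  · rwa [setLAverage_eq, htot, hvol] at hθ

theorem lintegral_ball_sdiff_ball_enorm_le_of_integrableOn_sq {E : Type*}
    [NormedAddCommGroup E] {g : ℂ → E} (hg : AEStronglyMeasurable g)
    (hg2 : IntegrableOn (fun z => ‖g z‖ ^ 2) (ball 0 1)) {r : ℝ} (hr0 : 0 ≤ r) (hr1 : r ≤ 1) :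
    ∫⁻ z in ball 0 1 \ ball 0 r, ‖g z‖ₑ ≤
      ENNReal.ofReal (√(π * (1 - r ^ 2)) * √(∫ z in ball 0 1, ‖g z‖ ^ 2)) := by
  have hvol : volume.real (ball (0 : ℂ) 1 \ ball 0 r) = π * (1 - r ^ 2) := by
    rw [measureReal_sdiff (ball_subset_ball hr1) measurableSet_ball,
      Complex.volume_real_ball _ hr0, Complex.volume_real_ball _ zero_le_one]
    ring
  have : IsFiniteMeasure (volume.restrict (ball (0 : ℂ) 1 \ ball 0 r)) :=
    isFiniteMeasure_restrict.2 ((measure_mono sdiff_subset).trans_lt measure_ball_lt_top).ne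
  refine (lintegral_enorm_le_sqrt_measureReal_mul_sqrt_integral_sq hg.restrict
    (hg2.mono_set sdiff_subset)).trans ?_
  rw [measureReal_restrict_apply_univ, hvol]
  refine ENNReal.ofReal_le_ofReal
    (mul_le_mul_of_nonneg_left (Real.sqrt_le_sqrt ?_) (Real.sqrt_nonneg _))
  exact setIntegral_mono_set hg2 (.of_forall fun z => sq_nonneg _) sdiff_subset.eventuallyLE

theorem exists_norm_eq_one_lintegral_ray_le_of_integrableOn_sq {E : Type*}
    [NormedAddCommGroup E] {g : ℂ → E} (hg : StronglyMeasurable g)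
    (hg2 : IntegrableOn (fun z => ‖g z‖ ^ 2) (ball 0 1)) {r : ℝ} (hr0 : 0 < r) (hr1 : r ≤ 1) :
    ∃ e : ℂ, ‖e‖ = 1 ∧ ∫⁻ t in Ico r 1, ‖g (t * e)‖ₑ ≤
      ENNReal.ofReal (√(π * (1 - r ^ 2)) * √(∫ z in ball 0 1, ‖g z‖ ^ 2) / (2 * π * r)) := by
  set S := ball (0 : ℂ) 1 \ ball 0 r
  have hS : MeasurableSet S := measurableSet_ball.diff measurableSet_ball
  obtain ⟨e, he, hray⟩ := Complex.exists_norm_eq_one_lintegral_ray_le (hg.enorm.indicator hS)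
  refine ⟨e, he, ?_⟩
  have hpoint : ∀ t ∈ Ico r 1, ENNReal.ofReal r * ‖g (t * e)‖ₑ ≤
      ENNReal.ofReal t * S.indicator (‖g ·‖ₑ) (t * e) := by
    intro t ht
    have hnorm : ‖(t : ℂ) * e‖ = t := by simp [he, abs_of_pos (hr0.trans_le ht.1)]
    have hmem : (t : ℂ) * e ∈ S := by
      simp only [S, Set.mem_sdiff, mem_ball, dist_zero_right, hnorm, not_lt]
      exact ⟨ht.2, ht.1⟩
    rw [indicator_of_mem hmem]
    gcongr
    exact ht.1
  have h2π : ENNReal.ofReal (2 * π) ≠ 0 := by simp [Real.pi_pos]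
  rw [ENNReal.ofReal_div_of_pos (by positivity),
    ENNReal.le_div_iff_mul_le (by simp [hr0, Real.pi_pos]) (by simp)]
  calc (∫⁻ t in Ico r 1, ‖g (t * e)‖ₑ) * ENNReal.ofReal (2 * π * r)
      = (∫⁻ t in Ico r 1, ENNReal.ofReal r * ‖g (t * e)‖ₑ) * ENNReal.ofReal (2 * π) := by
        rw [lintegral_const_mul' _ _ ENNReal.ofReal_ne_top, ENNReal.ofReal_mul (by positivity)]
        ring
    _ ≤ (∫⁻ t in Ioi 0, ENNReal.ofReal t * S.indicator (‖g ·‖ₑ) (t * e)) *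
          ENNReal.ofReal (2 * π) := by
        gcongr ?_ * _
        exact (setLIntegral_mono' measurableSet_Ico hpoint).trans
          (lintegral_mono_set fun t ht => hr0.trans_le ht.1)
    _ ≤ ∫⁻ z, S.indicator (‖g ·‖ₑ) z :=
        (ENNReal.le_div_iff_mul_le (.inl h2π) (.inl ENNReal.ofReal_ne_top)).1 hray
    _ = ∫⁻ z in S, ‖g z‖ₑ := lintegral_indicator hS _
    _ ≤ _ := lintegral_ball_sdiff_ball_enorm_le_of_integrableOn_sq hg.aestronglyMeasurable hg2
        hr0.le hr1

section Holomorphic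

variable {E : Type*} [NormedAddCommGroup E] [NormedSpace ℂ E] [CompleteSpace E] {f : ℂ → E}
  {U : Set ℂ}

theorem enorm_sub_le_lintegral_enorm_deriv_ray (hU : IsOpen U) (hf : DifferentiableOn ℂ f U)
    {e : ℂ} (he : ‖e‖ = 1) {a b : ℝ} (hab : a ≤ b) (hray : ∀ t ∈ Icc a b, (t : ℂ) * e ∈ U) :
    ‖f (b * e) - f (a * e)‖ₑ ≤ ∫⁻ t in Icc a b, ‖deriv f (t * e)‖ₑ := by
  have hC1 : ContDiffOn ℝ 1 (fun s : ℝ => f (s * e)) (Icc a b) :=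
    ((hf.contDiffOn hU).restrict_scalars ℝ).comp
      (Complex.ofRealCLM.contDiff.mul contDiff_const).contDiffOn hray
  refine (enorm_sub_le_lintegral_deriv_of_contDiffOn_Icc hC1 hab).trans_eq ?_
  refine setLIntegral_congr_fun measurableSet_Icc fun t ht => ?_
  have hline : HasDerivAt (fun s : ℝ => (s : ℂ) * e) e t := by
    simpa using (Complex.ofRealCLM.hasDerivAt (x := t)).mul_const e
  have hγ : HasDerivAt (fun s : ℝ => f (s * e)) (e • deriv f (t * e)) t :=
    (hf.differentiableAt (hU.mem_nhds (hray t ht))).hasDerivAt.scomp t hline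
  rw [hγ.deriv, enorm_smul, ← ofReal_norm, he, ENNReal.ofReal_one, one_mul]

theorem norm_sub_le_iSup_norm_deriv_closedBall_mul (hU : IsOpen U)
    (hf : DifferentiableOn ℂ f U) {c z : ℂ} {r : ℝ} (hsub : closedBall c r ⊆ U)
    (hz : z ∈ closedBall c r) :
    ‖f z - f c‖ ≤ (⨆ w : closedBall c r, ‖deriv f w‖) * r := by
  have hr : 0 ≤ r := dist_nonneg.trans hz
  have hbound : ∀ w ∈ closedBall c r, ‖deriv f w‖ ≤ ⨆ w : closedBall c r, ‖deriv f w‖ :=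
    fun w hw => (isCompact_closedBall c r).le_ciSup_of_continuousOn
      ((hf.analyticOnNhd hU).deriv.continuousOn.mono hsub).norm hw
  calc ‖f z - f c‖ ≤ (⨆ w : closedBall c r, ‖deriv f w‖) * ‖z - c‖ :=
        (convex_closedBall c r).norm_image_sub_le_of_norm_deriv_le
          (fun w hw => hf.differentiableAt (hU.mem_nhds (hsub hw))) hbound
          (mem_closedBall_self hr) hz
    _ ≤ (⨆ w : closedBall c r, ‖deriv f w‖) * r := by
        gcongr
        · exact (norm_nonneg _).trans (hbound c (mem_closedBall_self hr))
        · exact mem_closedBall_iff_norm.1 hz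

end Holomorphic

theorem liminf_sInf_image_annulus_le {X : Type*} [SeminormedAddCommGroup X] {φ : X → ℝ}
    (hφ : ∀ x, 0 ≤ φ x) {r C : ℝ} (hr : r < 1)
    (h : ∀ s ∈ Ioo r 1, ∃ x, s ≤ ‖x‖ ∧ ‖x‖ < 1 ∧ φ x ≤ C) :
    liminf (fun s => sInf (φ '' {x | s ≤ ‖x‖ ∧ ‖x‖ < 1})) (𝓝[<] 1) ≤ C := by
  have hbdd : ∀ s : Set X, BddBelow (φ '' s) := fun s => ⟨0, by rintro _ ⟨x, -, rfl⟩; exact hφ x⟩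
  refine liminf_le_of_frequently_le (Eventually.frequently ?_)
    (isBoundedUnder_of ⟨0, fun s => Real.sInf_nonneg (by rintro _ ⟨x, -, rfl⟩; exact hφ x)⟩)
  filter_upwards [Ioo_mem_nhdsLT hr] with s hs
  obtain ⟨x, hxs, hx1, hxC⟩ := h s hs
  exact csInf_le_of_le (hbdd _) (mem_image_of_mem φ ⟨hxs, hx1⟩) hxC

/-- **Brody-type derivative lower bound.** For `f : 𝔻 → ℂⁿ` holomorphic
with finite area and `r ∈ (0,1)`,
`sup_{|z| ≤ r} ‖f'(z)‖ ≥ (1/r)·L − (√(π(1−r²))/(2π r²))·(area f)^{1/2}`,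
where `L = liminf_{s ↗ 1} inf_{s ≤ |z| < 1} ‖f(z) − f(0)‖`. -/
theorem sup_deriv_ge_of_liminf_dist
    (m : ℕ) (f : ℂ → EuclideanSpace ℂ (Fin m))
    (hf : DifferentiableOn ℂ f (Metric.ball (0 : ℂ) 1))
    (harea : IntegrableOn (fun z => ‖deriv f z‖ ^ 2) (Metric.ball (0 : ℂ) 1))
    (r : ℝ) (hr : r ∈ Set.Ioo (0 : ℝ) 1)
    (L : ℝ)
    (hL : L = Filter.liminf
      (fun s : ℝ => sInf ((fun z : ℂ => ‖f z - f 0‖) ''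
        {z : ℂ | s ≤ ‖z‖ ∧ ‖z‖ < 1}))
      (nhdsWithin (1 : ℝ) (Set.Iio 1))) :
    (⨆ z : Metric.closedBall (0 : ℂ) r, ‖deriv f (z : ℂ)‖)
      ≥ (1 / r) * L
        - (Real.sqrt (Real.pi * (1 - r ^ 2)) / (2 * Real.pi * r ^ 2))
          * Real.sqrt (∫ z in Metric.ball (0 : ℂ) 1, ‖deriv f z‖ ^ 2) := by
  obtain ⟨hr0, hr1⟩ := hr
  set M := ⨆ z : closedBall (0 : ℂ) r, ‖deriv f z‖
  set K := √(π * (1 - r ^ 2)) * √(∫ z in ball 0 1, ‖deriv f z‖ ^ 2) / (2 * π * r) with hK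
  obtain ⟨e, he, hray⟩ := exists_norm_eq_one_lintegral_ray_le_of_integrableOn_sq
    (stronglyMeasurable_deriv f) harea hr0 hr1.le
  have hnorm : ∀ t : ℝ, 0 ≤ t → ‖(t : ℂ) * e‖ = t := fun t ht => by simp [he, abs_of_nonneg ht]
  have hinner : ‖f (r * e) - f 0‖ ≤ M * r :=
    norm_sub_le_iSup_norm_deriv_closedBall_mul isOpen_ball hf (closedBall_subset_ball hr1)
      (by rw [mem_closedBall, dist_zero_right, hnorm r hr0.le])
  have houter : ∀ s ∈ Ioo r 1, ‖f (s * e) - f (r * e)‖ ≤ K := by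
    intro s hs
    have hFTC := enorm_sub_le_lintegral_enorm_deriv_ray isOpen_ball hf he hs.1.le fun t ht => by
      rw [mem_ball, dist_zero_right, hnorm t (hr0.le.trans ht.1)]
      exact ht.2.trans_lt hs.2
    rw [← ofReal_norm] at hFTC
    exact (ENNReal.ofReal_le_ofReal_iff (by positivity)).1
      (hFTC.trans ((lintegral_mono_set (Icc_subset_Ico_right hs.2)).trans hray))
  have hLle : L ≤ M * r + K := hL ▸ liminf_sInf_image_annulus_le (fun z => norm_nonneg _) hr1
    fun s hs => ⟨s * e, (hnorm s (hr0.trans hs.1).le).ge,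
      (hnorm s (hr0.trans hs.1).le).trans_lt hs.2,
      (norm_sub_le_norm_sub_add_norm_sub _ (f (r * e)) _).trans (by linarith [houter s hs])⟩
  rw [ge_iff_le, sub_le_iff_le_add]
  calc 1 / r * L ≤ 1 / r * (M * r + K) := by gcongr
    _ = M + √(π * (1 - r ^ 2)) / (2 * π * r ^ 2) * √(∫ z in ball 0 1, ‖deriv f z‖ ^ 2) := by
      rw [hK]
      field_simp
end

section
/- Let (f_n) be holomorphic maps f_n : 𝔻 → ℂⁿ with area(f_n) finite, and set L_n = liminf_{|z| → 1} ‖f_n(z) − f_n(0)‖. If L_n → ∞ and there is a constant B > 0 with area(f_n) ≤ B·L_n² for all n, then sup_{z ∈ 𝔻} (1−|z|²)·‖f_n'(z)‖ → ∞ as n → ∞. (This is the paper's Proposition 'area(f_n) = O(d²(f_n(0), f_n(∂𝔻))) implies the hyperbolic derivatives blow up', for maps into ℂⁿ with the standard metric.) -/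
/-
Bounded hyperbolic derivative, `(1 - |z|²) ‖f'(z)‖ ≤ M`, gives `‖f'‖ ≤ M / (1 - ρ²)` on the disk of
radius `ρ`, so along every ray the length of the image of `[0, ρ]` is at most `ρ M / (1 - ρ²)`.
On `[ρ, s]` the AM-GM inequality `‖f'‖ ≤ ε t ‖f'‖² / 2 + 1 / (2 ε t)` bounds the length by
`(ε / 2) ∫ t ‖f'‖² dt + log (1 / ρ) / (2 ε)`, and averaging over the angle in polar coordinates
yields a ray with `2π ∫ t ‖f'‖² dt ≤ area f`. Hence every circle `|z| = s` contains a point with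
`‖f z - f 0‖ ≤ ρ M / (1 - ρ²) + ε area(f) / (4π) + log (1 / ρ) / (2 ε)`, and the same bound holds
for `L = liminf_{|z| → 1} ‖f z - f 0‖`. If `area(f) ≤ B L²`, the choice `ρ = exp (-π / (2B))`,
`ε = π / (B L)` makes each of the last two terms at most `L / 4`, so `L ≤ 2 ρ M / (1 - ρ²)`:
a bounded hyperbolic derivative forces a bounded `L`.
-/

open MeasureTheory Filter Set Metric
open scoped Real ENNReal Topology

theorem exists_angle_two_pi_mul_lintegral_ray_le {g : ℂ → ℝ≥0∞} (hg : Measurable g) :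
    ∃ θ : ℝ, ENNReal.ofReal (2 * π) *
        ∫⁻ r in Ioi (0 : ℝ), ENNReal.ofReal r * g (r * Complex.exp (θ * Complex.I)) ≤
      ∫⁻ z, g z := by
  set F : ℝ × ℝ → ℝ≥0∞ := fun p => ENNReal.ofReal p.1 * g (p.1 * Complex.exp (p.2 * Complex.I))
  have hF : Measurable F := by fun_prop
  have hfubini : ∫⁻ θ in Ioo (-π) π, ∫⁻ r in Ioi (0 : ℝ), F (r, θ) = ∫⁻ z, g z := by
    have hray (p : ℝ × ℝ) : Complex.polarCoord.symm p = p.1 * Complex.exp (p.2 * Complex.I) := by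
      simp [Complex.exp_mul_I, ← Complex.ofReal_cos, ← Complex.ofReal_sin]
    rw [← Complex.lintegral_comp_polarCoord_symm, polarCoord_target, Measure.volume_eq_prod,
      ← Measure.prod_restrict]
    simp only [hray, smul_eq_mul]
    exact (lintegral_prod_symm F hF.aemeasurable).symm
  have hvol : volume (Ioo (-π) π) = ENNReal.ofReal (2 * π) := by
    rw [Real.volume_Ioo]; ring_nf
  have hvol0 : ENNReal.ofReal (2 * π) ≠ 0 := by simp [Real.pi_pos]
  obtain ⟨θ, -, hθ⟩ := exists_le_setLAverage (μ := volume) (s := Ioo (-π) π)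
    (hvol ▸ hvol0) (hvol ▸ ENNReal.ofReal_ne_top)
    (hF.lintegral_prod_left' (μ := volume.restrict (Ioi 0))).aemeasurable
  rw [setLAverage_eq, hfubini, hvol] at hθ
  refine ⟨θ, ?_⟩
  calc ENNReal.ofReal (2 * π) * ∫⁻ r in Ioi (0 : ℝ), F (r, θ)
      ≤ ENNReal.ofReal (2 * π) * ((∫⁻ z, g z) / ENNReal.ofReal (2 * π)) := by gcongr
    _ = ∫⁻ z, g z := ENNReal.mul_div_cancel hvol0 ENNReal.ofReal_ne_top

theorem integral_le_mul_integral_mul_sq_add_log {a : ℝ → ℝ} {ρ s ε : ℝ} (hρ : 0 < ρ)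
    (hρs : ρ ≤ s) (hε : 0 < ε) (ha : ContinuousOn a (Icc ρ s)) :
    ∫ t in ρ..s, a t ≤ ε / 2 * (∫ t in ρ..s, t * a t ^ 2) + Real.log (s / ρ) / (2 * ε) := by
  have hpos : ∀ t ∈ Icc ρ s, 0 < t := fun t ht => hρ.trans_le ht.1
  have hinv : ContinuousOn (fun t : ℝ => 1 / t) (Icc ρ s) :=
    continuousOn_const.div continuousOn_id fun t ht => (hpos t ht).ne'
  have hsq : ContinuousOn (fun t => t * a t ^ 2) (Icc ρ s) := continuousOn_id.mul (ha.pow 2)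
  have hint {g : ℝ → ℝ} (hg : ContinuousOn g (Icc ρ s)) : IntervalIntegrable g volume ρ s :=
    (uIcc_of_le hρs ▸ hg).intervalIntegrable
  have hamgm : ∀ t ∈ Icc ρ s, a t ≤ ε / 2 * (t * a t ^ 2) + 1 / (2 * ε) * (1 / t) := by
    intro t ht
    have hεt : 0 < ε * t := mul_pos hε (hpos t ht)
    have ht0 : t ≠ 0 := (hpos t ht).ne'
    have hsquare : 0 ≤ (ε * t * a t - 1) ^ 2 / (2 * (ε * t)) := by positivity
    have : (ε * t * a t - 1) ^ 2 / (2 * (ε * t)) =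
        ε / 2 * (t * a t ^ 2) + 1 / (2 * ε) * (1 / t) - a t := by
      field_simp; ring
    linarith
  calc ∫ t in ρ..s, a t
      ≤ ∫ t in ρ..s, (ε / 2 * (t * a t ^ 2) + 1 / (2 * ε) * (1 / t)) :=
        intervalIntegral.integral_mono_on hρs (hint ha)
          (hint ((continuousOn_const.mul hsq).add (continuousOn_const.mul hinv))) hamgm
    _ = ε / 2 * (∫ t in ρ..s, t * a t ^ 2) + Real.log (s / ρ) / (2 * ε) := by
      rw [intervalIntegral.integral_add ((hint hsq).const_mul _) ((hint hinv).const_mul _),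
        intervalIntegral.integral_const_mul, intervalIntegral.integral_const_mul,
        integral_one_div fun h => (hpos 0 (uIcc_of_le hρs ▸ h)).false]
      ring

noncomputable def boundaryDist {E : Type*} [NormedAddCommGroup E] (f : ℂ → E) : ℝ :=
  liminf (fun s : ℝ => sInf ((fun z => ‖f z - f 0‖) '' {z : ℂ | s ≤ ‖z‖ ∧ ‖z‖ < 1})) (𝓝[<] 1)

theorem boundaryDist_le_of_forall_exists_norm_sub_le {E : Type*} [NormedAddCommGroup E]
    {f : ℂ → E} {C ρ : ℝ} (hρ : ρ < 1)
    (h : ∀ s ∈ Ioo ρ 1, ∃ z : ℂ, s ≤ ‖z‖ ∧ ‖z‖ < 1 ∧ ‖f z - f 0‖ ≤ C) :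
    boundaryDist f ≤ C := by
  have hbdd (s : ℝ) : BddBelow ((fun z => ‖f z - f 0‖) '' {z : ℂ | s ≤ ‖z‖ ∧ ‖z‖ < 1}) :=
    ⟨0, by rintro _ ⟨z, -, rfl⟩; positivity⟩
  refine liminf_le_of_frequently_le (Eventually.frequently ?_)
    (isBoundedUnder_of ⟨0, fun s => Real.sInf_nonneg (by rintro _ ⟨z, -, rfl⟩; positivity)⟩)
  filter_upwards [Ioo_mem_nhdsLT hρ] with s hs
  obtain ⟨z, hz₁, hz₂, hz⟩ := h s hs
  exact (csInf_le (hbdd s) (mem_image_of_mem _ ⟨hz₁, hz₂⟩)).trans hz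

section Holomorphic

variable {E : Type*} [NormedAddCommGroup E] [NormedSpace ℂ E] {f : ℂ → E} {u : ℂ}

theorem ofReal_mul_mem_ball_of_norm_eq_one (hu : ‖u‖ = 1) {t : ℝ} (ht : t ∈ Ico 0 1) :
    (t : ℂ) * u ∈ ball (0 : ℂ) 1 := by
  simpa [hu, abs_of_nonneg ht.1] using ht.2

noncomputable def diskArea (f : ℂ → E) : ℝ := ∫ z in ball (0 : ℂ) 1, ‖deriv f z‖ ^ 2

theorem diskArea_nonneg (f : ℂ → E) : 0 ≤ diskArea f :=
  setIntegral_nonneg measurableSet_ball fun _ _ => by positivity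

theorem integral_norm_deriv_ray_le_of_forall_mul_norm_deriv_le (hu : ‖u‖ = 1) {M : ℝ}
    (hM : ∀ z ∈ ball (0 : ℂ) 1, (1 - ‖z‖ ^ 2) * ‖deriv f z‖ ≤ M) {ρ : ℝ} (hρ : 0 < ρ)
    (hρ1 : ρ < 1) :
    ∫ t in 0..ρ, ‖deriv f (t * u)‖ ≤ ρ * M / (1 - ρ ^ 2) := by
  have hρ2 : 0 < 1 - ρ ^ 2 := by nlinarith
  have hbound : ∀ t ∈ uIoc 0 ρ, ‖‖deriv f (t * u)‖‖ ≤ M / (1 - ρ ^ 2) := by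
    intro t ht
    rw [uIoc_of_le hρ.le] at ht
    have hz := hM _ (ofReal_mul_mem_ball_of_norm_eq_one hu ⟨ht.1.le, ht.2.trans_lt hρ1⟩)
    rw [norm_mul, hu, Complex.norm_real, Real.norm_eq_abs, abs_of_pos ht.1, mul_one] at hz
    have hρt : 1 - ρ ^ 2 ≤ 1 - t ^ 2 := by nlinarith [ht.1, ht.2]
    rw [norm_norm, le_div_iff₀ hρ2, mul_comm]
    exact (mul_le_mul_of_nonneg_right hρt (norm_nonneg _)).trans hz
  calc ∫ t in 0..ρ, ‖deriv f (t * u)‖ ≤ ‖∫ t in 0..ρ, ‖deriv f (t * u)‖‖ := le_abs_self _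
    _ ≤ M / (1 - ρ ^ 2) * |ρ - 0| := intervalIntegral.norm_integral_le_of_norm_le_const hbound
    _ = ρ * M / (1 - ρ ^ 2) := by rw [sub_zero, abs_of_pos hρ]; ring

variable [CompleteSpace E]

theorem continuousOn_deriv_ray (hf : DifferentiableOn ℂ f (ball 0 1)) (hu : ‖u‖ = 1) :
    ContinuousOn (fun t : ℝ => deriv f (t * u)) (Ico 0 1) :=
  (hf.analyticOnNhd isOpen_ball).deriv.continuousOn.comp (by fun_prop)
    fun _ ht => ofReal_mul_mem_ball_of_norm_eq_one hu ht

theorem norm_sub_le_integral_norm_deriv_ray (hf : DifferentiableOn ℂ f (ball 0 1))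
    (hu : ‖u‖ = 1) {s : ℝ} (hs : s ∈ Ico 0 1) :
    ‖f (s * u) - f 0‖ ≤ ∫ t in 0..s, ‖deriv f (t * u)‖ := by
  have hseg : uIcc 0 s ⊆ Ico 0 1 := by
    rw [uIcc_of_le hs.1]; exact Icc_subset_Ico_right hs.2
  have hderiv : ∀ t ∈ uIcc 0 s, HasDerivAt (fun t : ℝ => f (t * u)) (u • deriv f (t * u)) t := by
    intro t ht
    have hdiff := hf.differentiableAt
      (isOpen_ball.mem_nhds (ofReal_mul_mem_ball_of_norm_eq_one hu (hseg ht)))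
    have hray : HasDerivAt (fun t : ℝ => (t : ℂ) * u) u t := by
      simpa using (Complex.ofRealCLM.hasDerivAt (x := t)).mul_const u
    exact hdiff.hasDerivAt.scomp t hray
  have hint : IntervalIntegrable (fun t : ℝ => u • deriv f (t * u)) volume 0 s :=
    (((continuousOn_deriv_ray hf hu).mono hseg).const_smul u).intervalIntegrable
  calc ‖f (s * u) - f 0‖ = ‖∫ t in 0..s, u • deriv f (t * u)‖ := by
        rw [intervalIntegral.integral_eq_sub_of_hasDerivAt hderiv hint]; simp
    _ ≤ ∫ t in 0..s, ‖u • deriv f (t * u)‖ :=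
        intervalIntegral.norm_integral_le_integral_norm hs.1
    _ = ∫ t in 0..s, ‖deriv f (t * u)‖ := by simp [norm_smul, hu]

theorem exists_angle_two_pi_mul_integral_ray_le_diskArea (hf : DifferentiableOn ℂ f (ball 0 1))
    (harea : IntegrableOn (fun z => ‖deriv f z‖ ^ 2) (ball 0 1)) {ρ s : ℝ} (hρ : 0 ≤ ρ)
    (hρs : ρ ≤ s) (hs : s < 1) :
    ∃ θ : ℝ, 2 * π * ∫ t in ρ..s, t * ‖deriv f (t * Complex.exp (θ * Complex.I))‖ ^ 2 ≤
      diskArea f := by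
  set g : ℂ → ℝ≥0∞ := (ball 0 1).indicator fun z => ENNReal.ofReal (‖deriv f z‖ ^ 2)
  have hg : Measurable g :=
    ((stronglyMeasurable_deriv f).norm.measurable.pow_const 2).ennreal_ofReal.indicator
      measurableSet_ball
  obtain ⟨θ, hθ⟩ := exists_angle_two_pi_mul_lintegral_ray_le hg
  refine ⟨θ, ?_⟩
  set u := Complex.exp (θ * Complex.I)
  have hu : ‖u‖ = 1 := Complex.norm_exp_ofReal_mul_I θ
  have hIcc : Icc ρ s ⊆ Ico 0 1 := Icc_subset_Ico hρ hs
  have hint : IntegrableOn (fun t : ℝ => t * ‖deriv f (t * u)‖ ^ 2) (Ioc ρ s) :=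
    (continuousOn_id.mul (((continuousOn_deriv_ray hf hu).mono hIcc).norm.pow 2)
      |>.integrableOn_Icc).mono_set Ioc_subset_Icc_self
  have hray : ENNReal.ofReal (∫ t in ρ..s, t * ‖deriv f (t * u)‖ ^ 2) ≤
      ∫⁻ r in Ioi (0 : ℝ), ENNReal.ofReal r * g (r * u) := by
    rw [intervalIntegral.integral_of_le hρs, ofReal_integral_eq_lintegral_ofReal hint
      ((ae_restrict_iff' measurableSet_Ioc).2 (.of_forall fun t ht => by
        have := hρ.trans_lt ht.1; positivity))]
    calc ∫⁻ t in Ioc ρ s, ENNReal.ofReal (t * ‖deriv f (t * u)‖ ^ 2)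
        = ∫⁻ t in Ioc ρ s, ENNReal.ofReal t * g (t * u) := by
          refine setLIntegral_congr_fun measurableSet_Ioc fun t ht => ?_
          rw [show g (t * u) = ENNReal.ofReal (‖deriv f (t * u)‖ ^ 2) from indicator_of_mem
            (ofReal_mul_mem_ball_of_norm_eq_one hu (hIcc (Ioc_subset_Icc_self ht))) _,
            ENNReal.ofReal_mul (hρ.trans ht.1.le)]
      _ ≤ ∫⁻ r in Ioi (0 : ℝ), ENNReal.ofReal r * g (r * u) :=
          lintegral_mono_set fun t ht => hρ.trans_lt ht.1
  have harea' : ∫⁻ z, g z = ENNReal.ofReal (diskArea f) := by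
    rw [lintegral_indicator measurableSet_ball, diskArea, ofReal_integral_eq_lintegral_ofReal
      harea (.of_forall fun _ => by positivity)]
  rw [← ENNReal.ofReal_le_ofReal_iff (diskArea_nonneg f), ENNReal.ofReal_mul (by positivity),
    ← harea']
  exact le_trans (by gcongr) hθ

theorem exists_norm_sub_le_of_forall_mul_norm_deriv_le (hf : DifferentiableOn ℂ f (ball 0 1))
    (harea : IntegrableOn (fun z => ‖deriv f z‖ ^ 2) (ball 0 1)) {M : ℝ}
    (hM : ∀ z ∈ ball (0 : ℂ) 1, (1 - ‖z‖ ^ 2) * ‖deriv f z‖ ≤ M) {ρ s ε : ℝ} (hρ : 0 < ρ)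
    (hρs : ρ < s) (hs : s < 1) (hε : 0 < ε) :
    ∃ z : ℂ, s ≤ ‖z‖ ∧ ‖z‖ < 1 ∧
      ‖f z - f 0‖ ≤ ρ * M / (1 - ρ ^ 2) + ε * diskArea f / (4 * π) - Real.log ρ / (2 * ε) := by
  obtain ⟨θ, hθ⟩ := exists_angle_two_pi_mul_integral_ray_le_diskArea hf harea hρ.le hρs.le hs
  set u := Complex.exp (θ * Complex.I)
  have hu : ‖u‖ = 1 := Complex.norm_exp_ofReal_mul_I θ
  have hs0 : 0 < s := hρ.trans hρs
  refine ⟨s * u, by simp [hu, abs_of_pos hs0], by simpa [hu, abs_of_pos hs0] using hs, ?_⟩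
  have hcont : ContinuousOn (fun t : ℝ => ‖deriv f (t * u)‖) (Ico 0 1) :=
    (continuousOn_deriv_ray hf hu).norm
  have hint {a b : ℝ} (ha : 0 ≤ a) (hab : a ≤ b) (hb : b < 1) :
      IntervalIntegrable (fun t : ℝ => ‖deriv f (t * u)‖) volume a b :=
    (hcont.mono (Icc_subset_Ico ha hb)).intervalIntegrable_of_Icc hab
  have hcore := integral_norm_deriv_ray_le_of_forall_mul_norm_deriv_le hu hM hρ (hρs.trans hs)
  have hannulus := integral_le_mul_integral_mul_sq_add_log hρ hρs.le hε
    (hcont.mono (Icc_subset_Ico hρ.le hs))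
  have hlog : Real.log (s / ρ) ≤ -Real.log ρ := by
    rw [Real.log_div hs0.ne' hρ.ne']
    linarith [Real.log_nonpos hs0.le hs.le]
  have harea_term : ε / 2 * (∫ t in ρ..s, t * ‖deriv f (t * u)‖ ^ 2) ≤
      ε * diskArea f / (4 * π) := by
    rw [show ε * diskArea f / (4 * π) = ε / 2 * (diskArea f / (2 * π)) by ring]
    gcongr
    rw [le_div_iff₀ (by positivity)]
    linarith
  calc ‖f (s * u) - f 0‖ ≤ ∫ t in 0..s, ‖deriv f (t * u)‖ :=
        norm_sub_le_integral_norm_deriv_ray hf hu ⟨hs0.le, hs⟩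
    _ = (∫ t in 0..ρ, ‖deriv f (t * u)‖) + ∫ t in ρ..s, ‖deriv f (t * u)‖ :=
        (intervalIntegral.integral_add_adjacent_intervals (hint le_rfl hρ.le (hρs.trans hs))
          (hint hρ.le hρs.le hs)).symm
    _ ≤ _ := by
        have : Real.log (s / ρ) / (2 * ε) ≤ -Real.log ρ / (2 * ε) := by gcongr
        rw [sub_eq_add_neg, ← neg_div]
        linarith

theorem boundaryDist_le_of_forall_mul_norm_deriv_le (hf : DifferentiableOn ℂ f (ball 0 1))
    (harea : IntegrableOn (fun z => ‖deriv f z‖ ^ 2) (ball 0 1)) {M : ℝ}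
    (hM : ∀ z ∈ ball (0 : ℂ) 1, (1 - ‖z‖ ^ 2) * ‖deriv f z‖ ≤ M) {ρ ε : ℝ} (hρ : 0 < ρ)
    (hρ1 : ρ < 1) (hε : 0 < ε) :
    boundaryDist f ≤ ρ * M / (1 - ρ ^ 2) + ε * diskArea f / (4 * π) - Real.log ρ / (2 * ε) :=
  boundaryDist_le_of_forall_exists_norm_sub_le hρ1 fun _ hs =>
    exists_norm_sub_le_of_forall_mul_norm_deriv_le hf harea hM hρ hs.1 hs.2 hε

end Holomorphic

/-- Let `f_n : 𝔻 → ℂⁿ` be holomorphic with finite area and set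
`L_n = liminf_{s ↗ 1} inf_{s ≤ |z| < 1} ‖f_n(z) − f_n(0)‖`. If `L_n → ∞` and
`area(f_n) ≤ B·L_n²`, then `sup_{z ∈ 𝔻} (1−|z|²)·‖f_n'(z)‖ → ∞`. -/
theorem hyperbolic_deriv_sup_tendsto_atTop_of_area_bigO_dist_sq
    (m : ℕ) (f : ℕ → ℂ → EuclideanSpace ℂ (Fin m))
    (hf : ∀ n, DifferentiableOn ℂ (f n) (Metric.ball (0 : ℂ) 1))
    (harea : ∀ n, IntegrableOn (fun z => ‖deriv (f n) z‖ ^ 2) (Metric.ball (0 : ℂ) 1))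
    (L : ℕ → ℝ)
    (hL : ∀ n, L n = Filter.liminf
      (fun s : ℝ => sInf ((fun z : ℂ => ‖f n z - f n 0‖) ''
        {z : ℂ | s ≤ ‖z‖ ∧ ‖z‖ < 1}))
      (nhdsWithin (1 : ℝ) (Set.Iio 1)))
    (hLtop : Tendsto L atTop atTop)
    (B : ℝ) (hB : 0 < B)
    (hbound : ∀ n, (∫ z in Metric.ball (0 : ℂ) 1, ‖deriv (f n) z‖ ^ 2) ≤ B * L n ^ 2) :
    ∀ M : ℝ, ∃ N : ℕ, ∀ n ≥ N, ∃ z ∈ Metric.ball (0 : ℂ) 1,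
      M < (1 - ‖z‖ ^ 2) * ‖deriv (f n) z‖ := by
  intro M
  set ρ := Real.exp (-(π / (2 * B)))
  obtain ⟨N, hN⟩ := eventually_atTop.mp
    (hLtop.eventually_gt_atTop (max (2 * (ρ * M / (1 - ρ ^ 2))) 0))
  refine ⟨N, fun n hn => ?_⟩
  by_contra! hM
  have hLpos : 0 < L n := (le_max_right _ _).trans_lt (hN n hn)
  have hest := boundaryDist_le_of_forall_mul_norm_deriv_le (hf n) (harea n) hM (ρ := ρ)
    (ε := π / (B * L n)) (Real.exp_pos _) (Real.exp_lt_one_iff.2 (neg_lt_zero.2 (by positivity)))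
    (by positivity)
  rw [show boundaryDist (f n) = L n from (hL n).symm] at hest
  have harea_term : π / (B * L n) * diskArea (f n) / (4 * π) ≤ L n / 4 := by
    rw [div_le_div_iff₀ (by positivity) (by positivity), div_mul_eq_mul_div,
      div_mul_eq_mul_div, div_le_iff₀ (by positivity)]
    have hA : diskArea (f n) ≤ B * L n ^ 2 := hbound n
    nlinarith [mul_le_mul_of_nonneg_left hA Real.pi_pos.le]
  have hlog_term : Real.log ρ / (2 * (π / (B * L n))) = -(L n / 4) := by
    rw [Real.log_exp]; field_simp; ring
  linarith [le_max_left (2 * (ρ * M / (1 - ρ ^ 2))) 0, hN n hn]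
end

section
/- Let E be a real inner product space, β ≥ 0, and let ψ : E → ℝ be a C¹ (continuously Fréchet differentiable) function with ψ(x) ≥ 0 and ‖dψ_x‖ ≤ β·√(ψ(x)) for all x ∈ E. Then for all x, y ∈ E, |√(ψ(x)) − √(ψ(y))| ≤ (β/2)·‖x − y‖. (This is the estimate behind the paper's inclusion B(2s/β₀(s)) ⊆ {ψ ≤ s²} comparing metric balls with sublevel sets of a Stein potential with β₀-bounded derivative.) -/
/-! For `c > 0` the function `√(ψ + c)` is differentiable with
`‖d√(ψ + c)‖ = ‖dψ‖ / (2√(ψ + c)) ≤ β√ψ / (2√(ψ + c)) ≤ β/2`, so it is `(β/2)`-Lipschitz by the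
mean value inequality; letting `c → 0⁺` gives the claim for `√ψ`, which itself need not be
differentiable where `ψ` vanishes. -/

open Filter Topology

section SqrtAdd

variable {E : Type*} [NormedAddCommGroup E] [NormedSpace ℝ E] {ψ : E → ℝ} {β c : ℝ}

theorem norm_fderiv_sqrt_add_le (hβ : 0 ≤ β) (hc : 0 < c) {x : E} (hψ : DifferentiableAt ℝ ψ x)
    (hpos : 0 ≤ ψ x) (hbound : ‖fderiv ℝ ψ x‖ ≤ β * √(ψ x)) :
    ‖fderiv ℝ (fun z => √(ψ z + c)) x‖ ≤ β / 2 := by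
  have hsqrt_pos : 0 < √(ψ x + c) := Real.sqrt_pos.2 (by linarith)
  rw [((hψ.hasFDerivAt.add_const c).sqrt (by linarith)).fderiv, norm_smul, Real.norm_eq_abs,
    abs_of_pos (by positivity)]
  have hbound_c : ‖fderiv ℝ ψ x‖ ≤ β * √(ψ x + c) :=
    hbound.trans (mul_le_mul_of_nonneg_left (Real.sqrt_le_sqrt (by linarith)) hβ)
  calc 1 / (2 * √(ψ x + c)) * ‖fderiv ℝ ψ x‖
      ≤ 1 / (2 * √(ψ x + c)) * (β * √(ψ x + c)) := by gcongr
    _ = β / 2 := by field_simp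

theorem abs_sqrt_add_sub_sqrt_add_le (hβ : 0 ≤ β) (hc : 0 < c) (hψ : Differentiable ℝ ψ)
    (hpos : ∀ x, 0 ≤ ψ x) (hbound : ∀ x, ‖fderiv ℝ ψ x‖ ≤ β * √(ψ x)) (x y : E) :
    |√(ψ x + c) - √(ψ y + c)| ≤ β / 2 * ‖x - y‖ := by
  have hdiff : ∀ z, DifferentiableAt ℝ (fun z => √(ψ z + c)) z := fun z =>
    ((hψ z).add_const c).sqrt (by linarith [hpos z])
  simpa only [Real.norm_eq_abs] using convex_univ.norm_image_sub_le_of_norm_fderiv_le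
    (fun z _ => hdiff z) (fun z _ => norm_fderiv_sqrt_add_le hβ hc (hψ z) (hpos z) (hbound z))
    (Set.mem_univ y) (Set.mem_univ x)

end SqrtAdd

/-- If `ψ : E → ℝ` is `C¹` on a real inner product space, `ψ ≥ 0`
and `‖dψ_x‖ ≤ β·√(ψ x)` everywhere, then `√ψ` is `(β/2)`-Lipschitz:
`|√(ψ x) − √(ψ y)| ≤ (β/2)·‖x − y‖`. -/
theorem sqrt_lipschitz_of_deriv_bound
    {E : Type*} [NormedAddCommGroup E] [InnerProductSpace ℝ E]
    (β : ℝ) (hβ : 0 ≤ β) (ψ : E → ℝ) (hψ : ContDiff ℝ 1 ψ)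
    (hpos : ∀ x, 0 ≤ ψ x)
    (hbound : ∀ x, ‖fderiv ℝ ψ x‖ ≤ β * Real.sqrt (ψ x)) :
    ∀ x y : E, |Real.sqrt (ψ x) - Real.sqrt (ψ y)| ≤ (β / 2) * ‖x - y‖ := by
  intro x y
  have hlim : Tendsto (fun c => |√(ψ x + c) - √(ψ y + c)|) (𝓝[>] 0)
      (𝓝 |√(ψ x) - √(ψ y)|) := by
    have hcont : Continuous fun c => |√(ψ x + c) - √(ψ y + c)| := by fun_prop
    simpa only [add_zero] using (hcont.tendsto 0).mono_left nhdsWithin_le_nhds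
  refine le_of_tendsto hlim (eventually_nhdsWithin_of_forall fun c (hc : 0 < c) => ?_)
  exact abs_sqrt_add_sub_sqrt_add_le hβ hc (hψ.differentiable one_ne_zero) hpos hbound x y
end
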